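/- Let #_G be an n-ary generalised atom with associated nonempty set G of n-ary relations over {0,1}, and let φ₁,…,φₙ be LTL formulae. Then #_G(φ₁,…,φₙ) ≡ ⩔_{R∈G} ⋁_{(b₁,…,bₙ)∈R} ( A¹(φ₁^{b₁} ∧ … ∧ φₙ^{bₙ}) ∧ ∼⊥ ), where φ^1 := φ and φ^0 := ¬φ in negation normal form, ⩔ ranges over Boolean disjunction and ⋁ over splitting disjunction. Moreover, if #_G is downward closed (equivalently, G is closed under subsets: R∈G and R'⊆R imply R'∈G), then #_G(φ₁,…,φₙ) ≡ ⩔_{R∈G} ⋁_{(b₁,…,bₙ)∈R} A¹(φ₁^{b₁} ∧ … ∧ φₙ^{bₙ}). -/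

import Mathlib

set_option maxHeartbeats 1000000

universe u

/-- A trace over the set `α` of atomic propositions: an infinite sequence of
sets of propositions. -/
abbrev Trace (α : Type u) := ℕ → Set α

/-- LTL formulae in negation normal form. -/
inductive LTLForm (α : Type u) : Type u where
  | pos : α → LTLForm α
  | neg : α → LTLForm α
  | lor : LTLForm α → LTLForm α → LTLForm α
  | land : LTLForm α → LTLForm α → LTLForm α
  | next : LTLForm α → LTLForm α
  | luntil : LTLForm α → LTLForm α → LTLForm α
  | wuntil : LTLForm α → LTLForm α → LTLForm α

namespace LTLForm
variable {α : Type u}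

/-- Standard single-trace LTL semantics. -/
def sat (t : Trace α) : ℕ → LTLForm α → Prop
  | i, pos p => p ∈ t i
  | i, neg p => p ∉ t i
  | i, lor φ ψ => sat t i φ ∨ sat t i ψ
  | i, land φ ψ => sat t i φ ∧ sat t i ψ
  | i, next φ => sat t (i+1) φ
  | i, luntil φ ψ => ∃ k, i ≤ k ∧ sat t k ψ ∧ ∀ m, i ≤ m → m < k → sat t m φ
  | i, wuntil φ ψ => ∀ k, i ≤ k → sat t k φ ∨ ∃ m, i ≤ m ∧ m ≤ k ∧ sat t m ψ

/-- Size of an LTL formula. -/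
def size : LTLForm α → ℕ
  | pos _ => 1
  | neg _ => 1
  | lor φ ψ => φ.size + ψ.size + 1
  | land φ ψ => φ.size + ψ.size + 1
  | next φ => φ.size + 1
  | luntil φ ψ => φ.size + ψ.size + 1
  | wuntil φ ψ => φ.size + ψ.size + 1

end LTLForm

/-- Extensions of `TeamLTL` by atoms and connectives:
Boolean disjunction `⩔`, Boolean negation `∼`, inclusion atoms `⊆`,
the universal subteam quantifier `A`, the singleton subteam quantifier `A¹`
and the non-emptiness atom `∼⊥`. -/
inductive TExt : Type where
  | bdis | bneg | incl | asub | asub1 | nebot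
deriving DecidableEq

/-- Formulae of TeamLTL together with all the extensions considered in the paper
(fragments are carved out via `TeamForm.exts`). -/
inductive TeamForm (α : Type u) : Type u where
  | pos : α → TeamForm α
  | neg : α → TeamForm α
  | lor : TeamForm α → TeamForm α → TeamForm α
  | land : TeamForm α → TeamForm α → TeamForm α
  | next : TeamForm α → TeamForm α
  | luntil : TeamForm α → TeamForm α → TeamForm α
  | wuntil : TeamForm α → TeamForm α → TeamForm α
  | bdis : TeamForm α → TeamForm α → TeamForm α
  | bneg : TeamForm α → TeamForm α
  | incl : List (LTLForm α × LTLForm α) → TeamForm α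
  | asub : TeamForm α → TeamForm α
  | asub1 : TeamForm α → TeamForm α
  | nebot : TeamForm α

namespace TeamForm
variable {α : Type u}

/-- Synchronous team semantics for (extended) TeamLTL. -/
def sat : Set (Trace α) → ℕ → TeamForm α → Prop
  | T, i, pos p => ∀ t ∈ T, p ∈ t i
  | T, i, neg p => ∀ t ∈ T, p ∉ t i
  | T, i, lor φ ψ => ∃ T₁ T₂, T₁ ∪ T₂ = T ∧ sat T₁ i φ ∧ sat T₂ i ψ
  | T, i, land φ ψ => sat T i φ ∧ sat T i ψ
  | T, i, next φ => sat T (i+1) φ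
  | T, i, luntil φ ψ => ∃ k, i ≤ k ∧ sat T k ψ ∧ ∀ m, i ≤ m → m < k → sat T m φ
  | T, i, wuntil φ ψ => ∀ k, i ≤ k → sat T k φ ∨ ∃ m, i ≤ m ∧ m ≤ k ∧ sat T m ψ
  | T, i, bdis φ ψ => sat T i φ ∨ sat T i ψ
  | T, i, bneg φ => ¬ sat T i φ
  | T, i, incl ps => ∀ t ∈ T, ∃ t' ∈ T, ∀ p ∈ ps, (LTLForm.sat t i p.1 ↔ LTLForm.sat t' i p.2)
  | T, i, asub φ => ∀ S, S ⊆ T → sat S i φ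
  | T, i, asub1 φ => ∀ t ∈ T, sat {t} i φ
  | T, _, nebot => T.Nonempty

/-- The collection of extensions (atoms/connectives beyond core TeamLTL)
occurring in a formula. -/
def exts : TeamForm α → Set TExt
  | pos _ => ∅
  | neg _ => ∅
  | lor φ ψ => exts φ ∪ exts ψ
  | land φ ψ => exts φ ∪ exts ψ
  | next φ => exts φ
  | luntil φ ψ => exts φ ∪ exts ψ
  | wuntil φ ψ => exts φ ∪ exts ψ
  | bdis φ ψ => insert TExt.bdis (exts φ ∪ exts ψ)
  | bneg φ => insert TExt.bneg (exts φ)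
  | incl _ => {TExt.incl}
  | asub φ => insert TExt.asub (exts φ)
  | asub1 φ => insert TExt.asub1 (exts φ)
  | nebot => {TExt.nebot}

/-- Size of an (extended) TeamLTL formula. -/
def size : TeamForm α → ℕ
  | pos _ => 1
  | neg _ => 1
  | lor φ ψ => φ.size + ψ.size + 1
  | land φ ψ => φ.size + ψ.size + 1
  | next φ => φ.size + 1
  | luntil φ ψ => φ.size + ψ.size + 1
  | wuntil φ ψ => φ.size + ψ.size + 1
  | bdis φ ψ => φ.size + ψ.size + 1
  | bneg φ => φ.size + 1
  | incl ps => (ps.map (fun p => p.1.size + p.2.size)).sum + 1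
  | asub φ => φ.size + 1
  | asub1 φ => φ.size + 1
  | nebot => 1

end TeamForm

namespace StarBlock
variable {α : Type u}

/-- Negation (in negation normal form) of an LTL formula. -/
def ldual : LTLForm α → LTLForm α
  | .pos p => .neg p
  | .neg p => .pos p
  | .lor φ ψ => .land (ldual φ) (ldual ψ)
  | .land φ ψ => .lor (ldual φ) (ldual ψ)
  | .next φ => .next (ldual φ)
  | .luntil φ ψ => .wuntil (ldual ψ) (.land (ldual φ) (ldual ψ))
  | .wuntil φ ψ => .luntil (ldual ψ) (.land (ldual φ) (ldual ψ))

/-- `φ ↔ ψ` as an LTL formula in negation normal form. -/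
def iffL (φ ψ : LTLForm α) : LTLForm α :=
  .lor (.land φ ψ) (.land (ldual φ) (ldual ψ))

/-- A tautological LTL formula `⊤ := p ∨ ¬p`. -/
def topL [Inhabited α] : LTLForm α := .lor (.pos default) (.neg default)

/-- Big conjunction of a list of LTL formulae (`⊤` for the empty list). -/
def bigAndL [Inhabited α] : List (LTLForm α) → LTLForm α
  | [] => topL
  | [φ] => φ
  | φ :: φs => .land φ (bigAndL φs)

/-- Embedding of LTL formulae into (Team)LTL formulae. -/
def toTeam : LTLForm α → TeamForm α
  | .pos p => .pos p
  | .neg p => .neg p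
  | .lor φ ψ => .lor (toTeam φ) (toTeam ψ)
  | .land φ ψ => .land (toTeam φ) (toTeam ψ)
  | .next φ => .next (toTeam φ)
  | .luntil φ ψ => .luntil (toTeam φ) (toTeam ψ)
  | .wuntil φ ψ => .wuntil (toTeam φ) (toTeam ψ)

/-- The translation `φ ↦ φ*` from `TeamLTL(⊆,⩔)` to LTL: replace each Boolean
disjunction `⩔` by `∨`, and each inclusion atom `φ₁,…,φₙ ⊆ ψ₁,…,ψₙ` by the
conjunction `⋀_{j≤n} (φⱼ ↔ ψⱼ)`.
(The clauses for connectives outside of `TeamLTL(⊆,⩔)` are irrelevant.) -/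
def star [Inhabited α] : TeamForm α → LTLForm α
  | .pos p => .pos p
  | .neg p => .neg p
  | .lor φ ψ => .lor (star φ) (star ψ)
  | .land φ ψ => .land (star φ) (star ψ)
  | .next φ => .next (star φ)
  | .luntil φ ψ => .luntil (star φ) (star ψ)
  | .wuntil φ ψ => .wuntil (star φ) (star ψ)
  | .bdis φ ψ => .lor (star φ) (star ψ)
  | .incl ps => bigAndL (ps.map fun p => iffL p.1 p.2)
  | .bneg φ => star φ
  | .asub φ => star φ
  | .asub1 φ => star φ
  | .nebot => topL

/-- A formula is 1-coherent if its satisfaction by a team is equivalent to its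
satisfaction by all singleton subteams. -/
def OneCoherent (φ : TeamForm α) : Prop :=
  ∀ (T : Set (Trace α)) (i : ℕ),
    TeamForm.sat T i φ ↔ ∀ t ∈ T, TeamForm.sat {t} i φ

end StarBlock

namespace GAtom
open StarBlock
variable {α : Type u}

/-- The Boolean truth value `⟦φ⟧_{(t,i)}` of an LTL formula. -/
noncomputable def tv (t : Trace α) (i : ℕ) (φ : LTLForm α) : Bool :=
  @ite _ (LTLForm.sat t i φ) (Classical.propDecidable _) true false

/-- Semantics of the generalised atom `#_G(φ₁,…,φₙ)` associated with the set
`G` of `n`-ary Boolean relations: the set of Boolean value combinations of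
`φ₁,…,φₙ` realised by the traces of the team belongs to `G`. -/
def gsat (n : ℕ) (G : Finset (Finset (Fin n → Bool))) (args : Fin n → LTLForm α)
    (T : Set (Trace α)) (i : ℕ) : Prop :=
  ∃ R ∈ G, {f : Fin n → Bool | ∃ t ∈ T, (fun j => tv t i (args j)) = f} = (↑R : Set (Fin n → Bool))

/-- `φ^1 := φ` and `φ^0 := ¬φ` in negation normal form. -/
def bpow (b : Bool) (φ : LTLForm α) : LTLForm α := if b then φ else ldual φ

/-- `⊥ := p ∧ ¬p`: a TeamLTL formula satisfied exactly by the empty team. -/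
def botT [Inhabited α] : TeamForm α := .land (.pos default) (.neg default)

/-- A formula satisfied by no team at all (used only for empty Boolean
disjunctions, which do not occur below). -/
def neverT [Inhabited α] : TeamForm α := .land .nebot botT

/-- Big Boolean disjunction `⩔` of a list of formulae. -/
def bigBdis [Inhabited α] : List (TeamForm α) → TeamForm α
  | [] => neverT
  | [φ] => φ
  | φ :: φs => .bdis φ (bigBdis φs)

/-- Big splitting disjunction `∨` of a list of formulae (`⊥` for the empty
list). -/
def bigOrT [Inhabited α] : List (TeamForm α) → TeamForm α
  | [] => botT
  | [φ] => φ
  | φ :: φs => .lor φ (bigOrT φs)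

/-- The formula `⩔_{R∈G} ⋁_{b∈R} ( A¹(φ₁^{b₁} ∧ … ∧ φₙ^{bₙ}) ∧ ∼⊥ )`. -/
noncomputable def atomFormulaAll [Inhabited α] (n : ℕ)
    (G : Finset (Finset (Fin n → Bool))) (args : Fin n → LTLForm α) : TeamForm α :=
  bigBdis (G.toList.map fun R =>
    bigOrT (R.toList.map fun b =>
      TeamForm.land
        (TeamForm.asub1 (toTeam (bigAndL (List.ofFn fun j => bpow (b j) (args j)))))
        TeamForm.nebot))

/-- The formula `⩔_{R∈G} ⋁_{b∈R} A¹(φ₁^{b₁} ∧ … ∧ φₙ^{bₙ})`. -/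
noncomputable def atomFormulaDC [Inhabited α] (n : ℕ)
    (G : Finset (Finset (Fin n → Bool))) (args : Fin n → LTLForm α) : TeamForm α :=
  bigBdis (G.toList.map fun R =>
    bigOrT (R.toList.map fun b =>
      TeamForm.asub1 (toTeam (bigAndL (List.ofFn fun j => bpow (b j) (args j))))))

end GAtom

/-!
Write `v t` for the tuple of truth values of `φ₁,…,φₙ` on a trace `t`; then `#_G` holds on `T`
iff `v '' T ∈ G`. A formula `A¹(φ₁^{b₁} ∧ … ∧ φₙ^{bₙ})` holds on a team `S` iff `v '' S ⊆ {b}`,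
and adding `∼⊥` makes this `v '' S = {b}`. Splitting `T` along the preimages of the
values of `v`, the split disjunction over `b ∈ R` holds iff `v '' T = R` (resp. `v '' T ⊆ R`),
and for downward closed `G` "contained in some `R ∈ G`" is the same as "equal to some `R ∈ G`".
-/

namespace LTLForm

theorem not_until_iff_weakUntil {P Q : ℕ → Prop} {i : ℕ} :
    (¬∃ k, i ≤ k ∧ Q k ∧ ∀ m, i ≤ m → m < k → P m) ↔
      ∀ k, i ≤ k → ¬Q k ∨ ∃ m, i ≤ m ∧ m ≤ k ∧ ¬P m ∧ ¬Q m := by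
  classical
  constructor
  · intro h k hk
    by_cases hQk : Q k
    · -- Before the first `Q`-position after `i` there is a `¬P`-position, necessarily not a `Q`.
      have hQ : ∃ k, i ≤ k ∧ Q k := ⟨k, hk, hQk⟩
      obtain ⟨hik₀, hQk₀⟩ := Nat.find_spec hQ
      have : ¬∀ m, i ≤ m → m < Nat.find hQ → P m := fun hP => h ⟨_, hik₀, hQk₀, hP⟩
      push Not at this
      obtain ⟨m, him, hmk₀, hnP⟩ := this
      exact Or.inr ⟨m, him, (hmk₀.trans_le (Nat.find_min' hQ ⟨hk, hQk⟩)).le, hnP,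
        fun hQm => Nat.find_min hQ hmk₀ ⟨him, hQm⟩⟩
    · exact Or.inl hQk
  · rintro h ⟨k, hk, hQk, hP⟩
    rcases h k hk with hnQ | ⟨m, him, hmk, hnP, hnQ⟩
    · exact hnQ hQk
    · rcases hmk.lt_or_eq with hlt | rfl
      · exact hnP (hP m him hlt)
      · exact hnQ hQk

theorem not_weakUntil_iff_until {P Q : ℕ → Prop} {i : ℕ} :
    (¬∀ k, i ≤ k → P k ∨ ∃ m, i ≤ m ∧ m ≤ k ∧ Q m) ↔
      ∃ k, i ≤ k ∧ (¬P k ∧ ¬Q k) ∧ ∀ m, i ≤ m → m < k → ¬Q m := by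
  push Not
  constructor
  · rintro ⟨k, hk, hnP, hnQ⟩
    exact ⟨k, hk, ⟨hnP, hnQ k hk le_rfl⟩, fun m hm hmk => hnQ m hm hmk.le⟩
  · rintro ⟨k, hk, ⟨hnP, hnQk⟩, hnQ⟩
    refine ⟨k, hk, hnP, fun m hm hmk => ?_⟩
    rcases hmk.lt_or_eq with hlt | rfl
    exacts [hnQ m hm hlt, hnQk]

end LTLForm

namespace StarBlock
variable {α : Type u}

theorem sat_ldual (φ : LTLForm α) (t : Trace α) (i : ℕ) :
    LTLForm.sat t i (ldual φ) ↔ ¬LTLForm.sat t i φ := by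
  induction φ generalizing i with
  | pos p => exact Iff.rfl
  | neg p => exact not_not.symm
  | lor φ ψ ihφ ihψ => simp only [ldual, LTLForm.sat, ihφ, ihψ, not_or]
  | land φ ψ ihφ ihψ => simp only [ldual, LTLForm.sat, ihφ, ihψ, not_and_or]
  | next φ ih => exact ih (i + 1)
  | luntil φ ψ ihφ ihψ =>
    simp only [ldual, LTLForm.sat, ihφ, ihψ]
    exact LTLForm.not_until_iff_weakUntil.symm
  | wuntil φ ψ ihφ ihψ =>
    simp only [ldual, LTLForm.sat, ihφ, ihψ]
    exact LTLForm.not_weakUntil_iff_until.symm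

theorem sat_toTeam_empty (φ : LTLForm α) (i : ℕ) : TeamForm.sat ∅ i (toTeam φ) := by
  induction φ generalizing i with
  | pos p => exact fun _ h => h.elim
  | neg p => exact fun _ h => h.elim
  | lor φ ψ ihφ ihψ => exact ⟨∅, ∅, Set.union_empty _, ihφ i, ihψ i⟩
  | land φ ψ ihφ ihψ => exact ⟨ihφ i, ihψ i⟩
  | next φ ih => exact ih (i + 1)
  | luntil φ ψ ihφ ihψ => exact ⟨i, le_rfl, ihψ i, fun m _ _ => ihφ m⟩
  | wuntil φ ψ ihφ ihψ => exact fun k _ => Or.inl (ihφ k)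

theorem sat_toTeam_singleton (φ : LTLForm α) (t : Trace α) (i : ℕ) :
    TeamForm.sat {t} i (toTeam φ) ↔ LTLForm.sat t i φ := by
  induction φ generalizing i with
  | pos p => simp [toTeam, TeamForm.sat, LTLForm.sat]
  | neg p => simp [toTeam, TeamForm.sat, LTLForm.sat]
  | lor φ ψ ihφ ihψ =>
    constructor
    · rintro ⟨T₁, T₂, hT, h₁, h₂⟩
      -- One half of a split of `{t}` is `{t}` itself.
      have hT₁ : T₁ ⊆ {t} := hT ▸ Set.subset_union_left
      rcases Set.subset_singleton_iff_eq.1 hT₁ with rfl | rfl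
      · rw [Set.empty_union] at hT
        exact Or.inr ((ihψ i).1 (hT ▸ h₂))
      · exact Or.inl ((ihφ i).1 h₁)
    · rintro (h | h)
      · exact ⟨{t}, ∅, Set.union_empty _, (ihφ i).2 h, sat_toTeam_empty ψ i⟩
      · exact ⟨∅, {t}, Set.empty_union _, sat_toTeam_empty φ i, (ihψ i).2 h⟩
  | land φ ψ ihφ ihψ => exact and_congr (ihφ i) (ihψ i)
  | next φ ih => exact ih (i + 1)
  | luntil φ ψ ihφ ihψ => simp only [toTeam, TeamForm.sat, LTLForm.sat, ihφ, ihψ]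
  | wuntil φ ψ ihφ ihψ => simp only [toTeam, TeamForm.sat, LTLForm.sat, ihφ, ihψ]

theorem sat_topL [Inhabited α] (t : Trace α) (i : ℕ) : LTLForm.sat t i (topL : LTLForm α) :=
  em _

theorem sat_bigAndL [Inhabited α] (l : List (LTLForm α)) (t : Trace α) (i : ℕ) :
    LTLForm.sat t i (bigAndL l) ↔ ∀ φ ∈ l, LTLForm.sat t i φ := by
  induction l using bigAndL.induct with
  | case1 => simpa [bigAndL] using sat_topL t i
  | case2 φ => simp [bigAndL]
  | case3 φ ψ l ih => simp only [bigAndL, LTLForm.sat, ih, List.forall_mem_cons]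

end StarBlock

namespace GAtom
open StarBlock
variable {α : Type u}

theorem sat_botT [Inhabited α] (T : Set (Trace α)) (i : ℕ) :
    TeamForm.sat T i (botT : TeamForm α) ↔ T = ∅ := by
  refine ⟨fun ⟨hpos, hneg⟩ => Set.eq_empty_of_forall_notMem fun t ht => hneg t ht (hpos t ht),
    ?_⟩
  rintro rfl
  exact ⟨fun _ h => h.elim, fun _ h => h.elim⟩

theorem not_sat_neverT [Inhabited α] (T : Set (Trace α)) (i : ℕ) :
    ¬TeamForm.sat T i (neverT : TeamForm α) := fun ⟨hne, hbot⟩ =>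
  hne.ne_empty ((sat_botT T i).1 hbot)

theorem sat_bigBdis [Inhabited α] (l : List (TeamForm α)) (T : Set (Trace α)) (i : ℕ) :
    TeamForm.sat T i (bigBdis l) ↔ ∃ φ ∈ l, TeamForm.sat T i φ := by
  induction l using bigBdis.induct with
  | case1 => simpa [bigBdis] using not_sat_neverT T i
  | case2 φ => simp [bigBdis]
  | case3 φ ψ l ih => simp only [bigBdis, TeamForm.sat, ih, List.mem_cons, exists_eq_or_imp]

theorem sat_bpow (b : Bool) (φ : LTLForm α) (t : Trace α) (i : ℕ) :
    LTLForm.sat t i (bpow b φ) ↔ tv t i φ = b := by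
  by_cases h : LTLForm.sat t i φ <;> cases b <;> simp [bpow, tv, h, sat_ldual]

section ImageDetermined

variable {β : Type*} (key : Trace α → β) {i : ℕ} {φ ψ : TeamForm α}

theorem sat_lor_iff_image_eq {A B : Set β}
    (hφ : ∀ S, TeamForm.sat S i φ ↔ key '' S = A)
    (hψ : ∀ S, TeamForm.sat S i ψ ↔ key '' S = B)
    (T : Set (Trace α)) : TeamForm.sat T i (.lor φ ψ) ↔ key '' T = A ∪ B := by
  constructor
  · rintro ⟨T₁, T₂, rfl, h₁, h₂⟩
    rw [Set.image_union, (hφ T₁).1 h₁, (hψ T₂).1 h₂]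
  · intro hT
    refine ⟨T ∩ key ⁻¹' A, T ∩ key ⁻¹' B, ?_, ?_, ?_⟩
    · rw [← Set.inter_union_distrib_left, ← Set.preimage_union, Set.inter_eq_left,
        ← Set.image_subset_iff, hT]
    · rw [hφ, Set.image_inter_preimage, hT, Set.union_inter_cancel_left]
    · rw [hψ, Set.image_inter_preimage, hT, Set.union_inter_cancel_right]

theorem sat_lor_iff_image_subset {A B : Set β}
    (hφ : ∀ S, TeamForm.sat S i φ ↔ key '' S ⊆ A)
    (hψ : ∀ S, TeamForm.sat S i ψ ↔ key '' S ⊆ B)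
    (T : Set (Trace α)) : TeamForm.sat T i (.lor φ ψ) ↔ key '' T ⊆ A ∪ B := by
  constructor
  · rintro ⟨T₁, T₂, rfl, h₁, h₂⟩
    rw [Set.image_union]
    exact Set.union_subset_union ((hφ T₁).1 h₁) ((hψ T₂).1 h₂)
  · intro hT
    refine ⟨T ∩ key ⁻¹' A, T ∩ key ⁻¹' B, ?_, ?_, ?_⟩
    · rw [← Set.inter_union_distrib_left, ← Set.preimage_union, Set.inter_eq_left,
        ← Set.image_subset_iff]
      exact hT
    · exact (hφ _).2 (Set.image_subset_iff.2 Set.inter_subset_right)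
    · exact (hψ _).2 (Set.image_subset_iff.2 Set.inter_subset_right)

variable [Inhabited α] (Φ : β → TeamForm α)

theorem sat_bigOrT_map_iff_image_eq
    (hΦ : ∀ b S, TeamForm.sat S i (Φ b) ↔ key '' S = {b}) (l : List β) (T : Set (Trace α)) :
    TeamForm.sat T i (bigOrT (l.map Φ)) ↔ key '' T = {b | b ∈ l} := by
  induction l generalizing T with
  | nil => simp [bigOrT, sat_botT]
  | cons b l ih =>
    cases l with
    | nil => simpa [bigOrT] using hΦ b T
    | cons c l =>
      change TeamForm.sat T i (.lor (Φ b) (bigOrT ((c :: l).map Φ))) ↔ _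
      rw [sat_lor_iff_image_eq key (hΦ b) ih, Set.singleton_union]
      congr! 1
      ext
      simp

theorem sat_bigOrT_map_iff_image_subset
    (hΦ : ∀ b S, TeamForm.sat S i (Φ b) ↔ key '' S ⊆ {b}) (l : List β) (T : Set (Trace α)) :
    TeamForm.sat T i (bigOrT (l.map Φ)) ↔ key '' T ⊆ {b | b ∈ l} := by
  induction l generalizing T with
  | nil => simp [bigOrT, sat_botT]
  | cons b l ih =>
    cases l with
    | nil => simpa [bigOrT] using hΦ b T
    | cons c l =>
      change TeamForm.sat T i (.lor (Φ b) (bigOrT ((c :: l).map Φ))) ↔ _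
      rw [sat_lor_iff_image_subset key (hΦ b) ih, Set.singleton_union]
      congr! 1
      ext
      simp

end ImageDetermined

variable {n : ℕ} (args : Fin n → LTLForm α)

noncomputable def truthValues (i : ℕ) (t : Trace α) : Fin n → Bool := fun j => tv t i (args j)

theorem gsat_iff (G : Finset (Finset (Fin n → Bool))) (T : Set (Trace α)) (i : ℕ) :
    gsat n G args T i ↔ ∃ R ∈ G, truthValues args i '' T = ↑R :=
  Iff.rfl

theorem sat_bigAndL_bpow [Inhabited α] (b : Fin n → Bool) (t : Trace α) (i : ℕ) :
    LTLForm.sat t i (bigAndL (List.ofFn fun j => bpow (b j) (args j))) ↔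
      truthValues args i t = b := by
  simp only [sat_bigAndL, List.forall_mem_ofFn_iff, sat_bpow, funext_iff, truthValues]

theorem sat_asub1_bigAndL_bpow [Inhabited α] (b : Fin n → Bool) (S : Set (Trace α)) (i : ℕ) :
    TeamForm.sat S i (.asub1 (toTeam (bigAndL (List.ofFn fun j => bpow (b j) (args j))))) ↔
      truthValues args i '' S ⊆ {b} := by
  rw [Set.subset_singleton_iff, Set.forall_mem_image]
  simp only [TeamForm.sat, sat_toTeam_singleton, sat_bigAndL_bpow]

theorem sat_asub1_bigAndL_bpow_land_nebot [Inhabited α] (b : Fin n → Bool)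
    (S : Set (Trace α)) (i : ℕ) :
    TeamForm.sat S i
        (.land (.asub1 (toTeam (bigAndL (List.ofFn fun j => bpow (b j) (args j))))) .nebot) ↔
      truthValues args i '' S = {b} := by
  change TeamForm.sat S i (.asub1 _) ∧ S.Nonempty ↔ _
  rw [sat_asub1_bigAndL_bpow, ← Set.image_nonempty (f := truthValues args i)]
  exact ⟨fun ⟨hsub, hne⟩ => hne.subset_singleton_iff.1 hsub,
    fun h => ⟨h.subset, h ▸ Set.singleton_nonempty b⟩⟩

theorem sat_atomFormulaAll [Inhabited α] (G : Finset (Finset (Fin n → Bool)))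
    (T : Set (Trace α)) (i : ℕ) :
    TeamForm.sat T i (atomFormulaAll n G args) ↔ ∃ R ∈ G, truthValues args i '' T = ↑R := by
  simp only [atomFormulaAll, sat_bigBdis, List.mem_map, exists_exists_and_eq_and,
    Finset.mem_toList,
    sat_bigOrT_map_iff_image_eq _ _ (sat_asub1_bigAndL_bpow_land_nebot args · · i)]
  rfl

theorem sat_atomFormulaDC [Inhabited α] (G : Finset (Finset (Fin n → Bool)))
    (T : Set (Trace α)) (i : ℕ) :
    TeamForm.sat T i (atomFormulaDC n G args) ↔ ∃ R ∈ G, truthValues args i '' T ⊆ ↑R := by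
  simp only [atomFormulaDC, sat_bigBdis, List.mem_map, exists_exists_and_eq_and,
    Finset.mem_toList, sat_bigOrT_map_iff_image_subset _ _ (sat_asub1_bigAndL_bpow args · · i)]
  rfl

end GAtom

theorem Finset.exists_mem_coe_eq_iff_exists_mem_subset_coe {β : Type*} {G : Finset (Finset β)}
    (hG : ∀ R ∈ G, ∀ R' ⊆ R, R' ∈ G) (s : Set β) :
    (∃ R ∈ G, s = ↑R) ↔ ∃ R ∈ G, s ⊆ ↑R := by
  refine ⟨fun ⟨R, hR, hs⟩ => ⟨R, hR, hs.subset⟩, fun ⟨R, hR, hs⟩ => ?_⟩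
  obtain ⟨R', rfl⟩ := (R.finite_toSet.subset hs).exists_finset_coe
  exact ⟨R', hG R hR R' (Finset.coe_subset.1 hs), rfl⟩

namespace Stmt13
open GAtom
variable {α : Type u}

theorem stmt_13_general [Inhabited α] (n : ℕ) (G : Finset (Finset (Fin n → Bool)))
    (args : Fin n → LTLForm α) :
    (∀ (T : Set (Trace α)) (i : ℕ),
        gsat n G args T i ↔ TeamForm.sat T i (atomFormulaAll n G args)) ∧
    ((∀ R ∈ G, ∀ R' ⊆ R, R' ∈ G) →
      ∀ (T : Set (Trace α)) (i : ℕ),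
        gsat n G args T i ↔ TeamForm.sat T i (atomFormulaDC n G args)) := by
  refine ⟨fun T i => (sat_atomFormulaAll args G T i).symm, fun hdc T i => ?_⟩
  rw [gsat_iff, sat_atomFormulaDC]
  exact Finset.exists_mem_coe_eq_iff_exists_mem_subset_coe hdc _

/-- Let `#_G` be an `n`-ary generalised atom with associated
nonempty set `G` of `n`-ary Boolean relations, and let `φ₁,…,φₙ` be LTL
formulae.  Then
`#_G(φ₁,…,φₙ) ≡ ⩔_{R∈G} ⋁_{b∈R} ( A¹(φ₁^{b₁}∧…∧φₙ^{bₙ}) ∧ ∼⊥ )`.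
Moreover, if `#_G` is downward closed (i.e. `G` is closed under subsets),
then `#_G(φ₁,…,φₙ) ≡ ⩔_{R∈G} ⋁_{b∈R} A¹(φ₁^{b₁}∧…∧φₙ^{bₙ})`. -/
theorem stmt_13 [Inhabited α] (n : ℕ) (G : Finset (Finset (Fin n → Bool)))
    (hG : G.Nonempty) (args : Fin n → LTLForm α) :
    (∀ (T : Set (Trace α)) (i : ℕ),
        gsat n G args T i ↔ TeamForm.sat T i (atomFormulaAll n G args)) ∧
    ((∀ R ∈ G, ∀ R' ⊆ R, R' ∈ G) →
      ∀ (T : Set (Trace α)) (i : ℕ),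
        gsat n G args T i ↔ TeamForm.sat T i (atomFormulaDC n G args)) :=
  stmt_13_general n G args

end Stmt13
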